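/- arXiv:2310.12139 — 2 statements merged into one kernel-verified Lean document; each statement's English description precedes it below -/
import Mathlib

section
/- Let g: ℝⁿ → ℝ be convex and differentiable, x ∈ ℝⁿ, M > 0, η ≥ 2M, and set x⁺⁺ := x - (1/η)∇g(x). If g(x⁺⁺) - g(x) - ⟨∇g(x), x⁺⁺ - x⟩ ≤ (M/2)‖x⁺⁺ - x‖², then ‖∇g(x)‖ ≤ √2 · η · ‖x - x*‖, where x* is any minimizer of g. -/
open scoped RealInnerProductSpace

/-!
Convexity of `g` gives the first-order bound `g x - g x* ≤ ⟪∇g x, x - x*⟫ ≤ ‖∇g x‖ ‖x - x*‖`,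
while the descent inequality for the step `x⁺⁺ = x - η⁻¹ ∇g x` gives
`g x - g x⁺⁺ ≥ (1/η - M/(2η²)) ‖∇g x‖² ≥ 3/(4η) ‖∇g x‖²` as `η ≥ 2M`. Since `g x* ≤ g x⁺⁺`,
combining both yields `‖∇g x‖ ≤ (4/3) η ‖x - x*‖ ≤ √2 η ‖x - x*‖`.
-/

section FirstOrder

variable {E : Type*} [NormedAddCommGroup E] [NormedSpace ℝ E] {f : E → ℝ} {s : Set E} {x y : E}

theorem ConvexOn.add_fderiv_sub_le {f' : E →L[ℝ] ℝ} (hf : ConvexOn ℝ s f) (hx : x ∈ s)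
    (hy : y ∈ s) (hf' : HasFDerivAt f f' x) : f x + f' (y - x) ≤ f y := by
  set L : ℝ →ᵃ[ℝ] E := AffineMap.lineMap x y
  have hL0 : L 0 = x := AffineMap.lineMap_apply_zero x y
  have hL1 : L 1 = y := AffineMap.lineMap_apply_one x y
  have hline : ConvexOn ℝ (L ⁻¹' s) (f ∘ L) := hf.comp_affineMap L
  have hderiv : HasDerivAt (f ∘ L) (f' (y - x)) 0 :=
    (hL0 ▸ hf').comp_hasDerivAt (0 : ℝ) AffineMap.hasDerivAt_lineMap
  have := hline.le_slope_of_hasDerivAt (by simpa [hL0]) (by simpa [hL1]) one_pos hderiv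
  rw [slope_def_field, Function.comp_apply, Function.comp_apply, hL0, hL1] at this
  linarith

theorem ConvexOn.add_inner_gradient_sub_le {F : Type*} [NormedAddCommGroup F]
    [InnerProductSpace ℝ F] [CompleteSpace F] {f : F → ℝ} {s : Set F} {x y G : F}
    (hf : ConvexOn ℝ s f) (hx : x ∈ s) (hy : y ∈ s) (hG : HasGradientAt f G x) :
    f x + ⟪G, y - x⟫ ≤ f y := by
  simpa using hf.add_fderiv_sub_le hx hy (hasGradientAt_iff_hasFDerivAt.mp hG)

end FirstOrder

theorem le_sqrt_two_mul_of_sq_le {M η N R : ℝ} (hM : 0 < M) (hη : 2 * M ≤ η) (hN : 0 ≤ N)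
    (hR : 0 ≤ R) (h : (1 / η - M / (2 * η ^ 2)) * N ^ 2 ≤ N * R) :
    N ≤ Real.sqrt 2 * η * R := by
  have hη0 : 0 < η := by linarith
  have hcoeff : 3 / 4 ≤ η * (1 / η - M / (2 * η ^ 2)) := by
    have hsmall : M / (2 * η) ≤ 1 / 4 := by rw [div_le_iff₀ (by positivity)]; linarith
    have : η * (1 / η - M / (2 * η ^ 2)) = 1 - M / (2 * η) := by field_simp
    linarith
  have hsqrt : 4 / 3 ≤ Real.sqrt 2 := Real.le_sqrt_of_sq_le (by norm_num)
  rcases hN.eq_or_lt with rfl | hNpos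
  · positivity
  · have h3 : 3 * N ≤ 4 * η * R := by
      nlinarith [mul_le_mul_of_nonneg_right hcoeff (sq_nonneg N)]
    nlinarith [mul_nonneg hη0.le hR]

theorem stmt_6 {n : ℕ} (g : EuclideanSpace ℝ (Fin n) → ℝ)
    (hg : ConvexOn ℝ Set.univ g) (hdiff : Differentiable ℝ g)
    (x xstar : EuclideanSpace ℝ (Fin n))
    (M η : ℝ) (hM : 0 < M) (hη : η ≥ 2 * M)
    (xpp : EuclideanSpace ℝ (Fin n)) (hxpp : xpp = x - (1 / η) • gradient g x)
    (hdesc : g xpp - g x - ⟪gradient g x, xpp - x⟫ ≤ M / 2 * ‖xpp - x‖ ^ 2)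
    (hmin : ∀ y, g xstar ≤ g y) :
    ‖gradient g x‖ ≤ Real.sqrt 2 * η * ‖x - xstar‖ := by
  set G := gradient g x
  have hη0 : 0 < η := by linarith
  have hstep : xpp - x = -(1 / η) • G := by rw [hxpp]; module
  have hinner : ⟪G, xpp - x⟫ = -(1 / η) * ‖G‖ ^ 2 := by
    rw [hstep, real_inner_smul_right, real_inner_self_eq_norm_sq]
  have hnorm : ‖xpp - x‖ ^ 2 = (1 / η) ^ 2 * ‖G‖ ^ 2 := by
    rw [hstep, norm_smul, norm_neg, Real.norm_of_nonneg (by positivity), mul_pow]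
  have hdrop : (1 / η - M / (2 * η ^ 2)) * ‖G‖ ^ 2 ≤ g x - g xpp := by
    rw [hinner, hnorm] at hdesc
    have : M / (2 * η ^ 2) = M / 2 * (1 / η) ^ 2 := by field_simp
    rw [sub_mul, this]
    linarith
  have hgap : g x - g xstar ≤ ‖G‖ * ‖x - xstar‖ := by
    have hfirst : g x + ⟪G, xstar - x⟫ ≤ g xstar :=
      hg.add_inner_gradient_sub_le (Set.mem_univ _) (Set.mem_univ _) (hdiff x).hasGradientAt
    rw [← neg_sub, inner_neg_right] at hfirst
    linarith [real_inner_le_norm G (x - xstar)]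
  exact le_sqrt_two_mul_of_sq_le hM hη (norm_nonneg _) (norm_nonneg _)
    (by linarith [hmin xpp])
end

section
/- Let f: ℝⁿ → ℝ be differentiable with ∇f L-Lipschitz, and suppose f has lower curvature constant l ∈ (0, L]. Fix u ∈ ℝⁿ, let l̃ ≥ l, and let F(y) := f(y) + l̃‖y - u‖² with minimizer x*. If x satisfies ‖∇f(x)‖ > ε and ‖∇F(x)‖ ≤ ε/4 for some ε > 0, then ‖∇f(x)‖² ≤ 10 l̃ (f(u) - f(x)). -/
open scoped RealInnerProductSpace

theorem grad_aux {n : ℕ} (f : EuclideanSpace ℝ (Fin n) → ℝ) (hdiff : Differentiable ℝ f)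
    (u x : EuclideanSpace ℝ (Fin n)) (ltil : ℝ)
    (F : EuclideanSpace ℝ (Fin n) → ℝ)
    (hF : F = fun y => f y + ltil * ‖y - u‖ ^ 2) :
    gradient F x = gradient f x + (2 * ltil) • (x - u) := by
  have h1 : HasFDerivAt f (fderiv ℝ f x) x := (hdiff x).hasFDerivAt
  have h2 : HasFDerivAt (fun y : EuclideanSpace ℝ (Fin n) => ‖y - u‖ ^ 2)
      (2 • (innerSL ℝ (x - u)).comp (ContinuousLinearMap.id ℝ _)) x := by
    simpa using (HasFDerivAt.norm_sq ((hasFDerivAt_id x).sub_const u))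
  have h3 : HasFDerivAt F (fderiv ℝ f x + ltil • (2 • (innerSL ℝ (x - u)).comp (ContinuousLinearMap.id ℝ _))) x := by
    rw [hF]; exact h1.add (h2.const_smul ltil)
  have h4 := (hasFDerivAt_iff_hasGradientAt.mp h3)
  rw [h4.gradient]
  have : (InnerProductSpace.toDual ℝ (EuclideanSpace ℝ (Fin n))) ((2 * ltil) • (x - u))
      = ltil • (2 • (innerSL ℝ (x - u)).comp (ContinuousLinearMap.id ℝ _)) := by
    ext v
    simp [InnerProductSpace.toDual_apply_apply, real_inner_smul_left]
    ring
  rw [← this]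
  simp [gradient]

theorem stmt_9 {n : ℕ} (f : EuclideanSpace ℝ (Fin n) → ℝ)
    (hdiff : Differentiable ℝ f)
    (L l : ℝ) (hL : 0 < L) (hl : 0 < l) (hlL : l ≤ L)
    (hlip : ∀ a b, ‖gradient f a - gradient f b‖ ≤ L * ‖a - b‖)
    (hcurv : ∀ x y, f y - f x - ⟪gradient f x, y - x⟫ ≥ -(l / 2) * ‖y - x‖ ^ 2)
    (u : EuclideanSpace ℝ (Fin n)) (ltil : ℝ) (hltil : ltil ≥ l)
    (F : EuclideanSpace ℝ (Fin n) → ℝ)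
    (hF : F = fun y => f y + ltil * ‖y - u‖ ^ 2)
    (xstar : EuclideanSpace ℝ (Fin n)) (hmin : ∀ y, F xstar ≤ F y)
    (ε : ℝ) (hε : 0 < ε)
    (x : EuclideanSpace ℝ (Fin n))
    (hx1 : ‖gradient f x‖ > ε) (hx2 : ‖gradient F x‖ ≤ ε / 4) :
    ‖gradient f x‖ ^ 2 ≤ 10 * ltil * (f u - f x) := by
  have hg : gradient F x = gradient f x + (2 * ltil) • (x - u) :=
    grad_aux f hdiff u x ltil F hF
  set g := gradient f x with hgdef
  set G := gradient F x with hGdef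
  have hltil0 : 0 < ltil := lt_of_lt_of_le hl hltil
  set r := ‖u - x‖ with hr
  have hr0 : 0 ≤ r := norm_nonneg _
  -- inner product decomposition
  have hinner : ⟪g, u - x⟫ = ⟪G, u - x⟫ + 2 * ltil * r ^ 2 := by
    rw [hg]
    rw [inner_add_left, real_inner_smul_left]
    have hxu : ⟪x - u, u - x⟫ = -(r ^ 2) := by
      have : x - u = -(u - x) := by abel
      rw [this, inner_neg_left, real_inner_self_eq_norm_sq]
    rw [hxu]; ring
  -- Cauchy-Schwarz
  have hCS : ⟪G, u - x⟫ ≥ -(ε / 4) * r := by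
    have h1 : |⟪G, u - x⟫| ≤ ‖G‖ * ‖u - x‖ := abs_real_inner_le_norm _ _
    have h2 : ‖G‖ * ‖u - x‖ ≤ (ε / 4) * r :=
      mul_le_mul_of_nonneg_right hx2 (norm_nonneg _)
    nlinarith [neg_abs_le ⟪G, u - x⟫]
  -- norm lower bound: 2 ltil r ≥ ‖g‖ - ε/4
  have hnormGg : ‖G - g‖ = 2 * ltil * r := by
    rw [hg]
    simp only [add_sub_cancel_left]
    rw [norm_smul, Real.norm_eq_abs, abs_of_pos (by linarith), norm_sub_rev x u]
  have hlow : 2 * ltil * r ≥ ‖g‖ - ε / 4 := by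
    have := norm_sub_norm_le g G
    have h2 : ‖g - G‖ = 2 * ltil * r := by rw [norm_sub_rev]; exact hnormGg
    linarith [h2 ▸ this]
  have hc := hcurv x u
  have hN : ‖g‖ > ε := hx1
  nlinarith [sq_nonneg (2 * ltil * r - ‖g‖), sq_nonneg (‖g‖ - ε), sq_nonneg r,
    mul_nonneg hr0 hε.le, mul_pos hltil0 (lt_trans hε hN),
    mul_le_mul_of_nonneg_left hlow (le_of_lt (by nlinarith [norm_nonneg g] : (0:ℝ) < 2 * ltil * r + ‖g‖ - ε/4 + 1)),
    sq_nonneg (2 * ltil * r - (3/4) * ‖g‖), mul_nonneg (mul_nonneg hltil0.le hr0) hr0]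
end
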